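/- arXiv:chao-dyn/9506014 — 2 statements merged into one kernel-verified Lean document; each statement's English description precedes it below -/
import Mathlib

section
/- Let (ζ_n)_{n≥0} be a sequence of complex numbers with |ζ_n| < exp(a + bn) for some a ∈ ℝ and b > 0. Then for any ε > 0, the series s(z) = ∑_{n=0}^∞ ζ_n · exp((z−n)(2π+b+ε)) · sin(2π(z−n))/(2π(z−n)) converges uniformly on every disk {|z| < ρ}, and s is an entire function on ℂ. -/
/-!
Writing `sin w / w` as `dslope sin 0 w`, which is entire and bounded by `exp ‖w‖`, makes every
term entire. For `‖z‖ ≤ ρ` the factor `exp ((z - n)(2π + b + ε))` contributes `exp (ρ(2π + b + ε))`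
times the decay `exp (-(2π + b + ε) n)`, the sinc factor at most `exp (2π(ρ + n))`, and `ζ n` at
most `exp (a + b n)`: the `n`-th term is bounded by `exp (a + ρ(4π + b + ε)) * exp (-ε) ^ n`.
The Weierstrass M-test gives uniform convergence on each disk, hence holomorphy of the limit.
-/

/-- The interpolation kernel `f_n` with the removable singularity at `z = n` filled in by 1. -/
noncomputable def fTerm (b ε : ℝ) (n : ℕ) (z : ℂ) : ℂ :=
  if z = (n : ℂ) then 1 else
    Complex.exp ((z - n) * (2 * Real.pi + b + ε)) *
      Complex.sin (2 * Real.pi * (z - n)) / (2 * Real.pi * (z - n))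

open Complex

theorem Real.cosh_le_exp_of_nonneg {x : ℝ} (hx : 0 ≤ x) : Real.cosh x ≤ Real.exp x := by
  rw [← Real.cosh_add_sinh x]
  linarith [Real.sinh_nonneg_iff.2 hx]

theorem Complex.norm_sin_le_mul_cosh (w : ℂ) : ‖sin w‖ ≤ ‖w‖ * Real.cosh ‖w‖ := by
  rw [Complex.sin_eq_tsum]
  refine tsum_of_norm_bounded ((Real.hasSum_cosh ‖w‖).mul_left ‖w‖) fun n => ?_
  simp only [norm_div, norm_mul, norm_pow, norm_neg, norm_one, one_pow, one_mul,
    Complex.norm_natCast]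
  rw [pow_succ, mul_comm (‖w‖ ^ (2 * n)), mul_div_assoc]
  gcongr
  omega

theorem Complex.norm_dslope_sin_le (w : ℂ) : ‖dslope sin 0 w‖ ≤ Real.exp ‖w‖ := by
  rcases eq_or_ne w 0 with rfl | hw
  · simp [dslope_same, Complex.deriv_sin]
  rw [dslope_of_ne _ hw, slope_def_field, sin_zero, sub_zero, sub_zero, norm_div,
    div_le_iff₀ (norm_pos_iff.2 hw), mul_comm]
  exact (norm_sin_le_mul_cosh w).trans
    (mul_le_mul_of_nonneg_left (Real.cosh_le_exp_of_nonneg (norm_nonneg w)) (norm_nonneg w))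

theorem Complex.differentiable_dslope_sin : Differentiable ℂ (dslope sin 0) := by
  rw [← differentiableOn_univ, differentiableOn_dslope Filter.univ_mem, differentiableOn_univ]
  exact differentiable_sin

theorem Complex.differentiable_tsum_of_forall_ball {E ι : Type*} [NormedAddCommGroup E]
    [NormedSpace ℂ E] [CompleteSpace E] {F : ι → ℂ → E} (hF : ∀ i, Differentiable ℂ (F i))
    (hu : ∀ ρ : ℝ, ∃ u : ι → ℝ, Summable u ∧ ∀ i z, ‖z‖ < ρ → ‖F i z‖ ≤ u i) :
    Differentiable ℂ fun z => ∑' i, F i z := by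
  intro z
  obtain ⟨u, hu, hFu⟩ := hu (‖z‖ + 1)
  have hball : DifferentiableOn ℂ (fun z => ∑' i, F i z) (Metric.ball 0 (‖z‖ + 1)) :=
    differentiableOn_tsum_of_summable_norm hu (fun i => (hF i).differentiableOn)
      Metric.isOpen_ball fun i w hw => hFu i w (mem_ball_zero_iff.1 hw)
  exact hball.differentiableAt (Metric.isOpen_ball.mem_nhds (by simp))

theorem fTerm_eq_exp_mul_dslope_sin (b ε : ℝ) (n : ℕ) (z : ℂ) :
    fTerm b ε n z =
      exp ((z - n) * (2 * Real.pi + b + ε)) * dslope sin 0 (2 * Real.pi * (z - n)) := by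
  rcases eq_or_ne z n with rfl | hz
  · simp [fTerm, dslope_same, Complex.deriv_sin]
  have hw : (2 * Real.pi * (z - n) : ℂ) ≠ 0 :=
    mul_ne_zero (mul_ne_zero two_ne_zero (ofReal_ne_zero.2 Real.pi_ne_zero)) (sub_ne_zero.2 hz)
  rw [fTerm, if_neg hz, dslope_of_ne _ hw, slope_def_field, sin_zero, sub_zero, sub_zero,
    mul_div_assoc]

theorem differentiable_fTerm (b ε : ℝ) (n : ℕ) : Differentiable ℂ (fTerm b ε n) := by
  simp only [funext (fTerm_eq_exp_mul_dslope_sin b ε n)]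
  exact (differentiable_exp.comp (by fun_prop)).mul (differentiable_dslope_sin.comp (by fun_prop))

theorem norm_fTerm_le {b ε ρ : ℝ} (hc : 0 ≤ 2 * Real.pi + b + ε) (n : ℕ) {z : ℂ} (hz : ‖z‖ ≤ ρ) :
    ‖fTerm b ε n z‖ ≤ Real.exp (ρ * (4 * Real.pi + b + ε) - (b + ε) * n) := by
  have hre : z.re ≤ ρ := (Complex.re_le_norm z).trans hz
  have hexp : ‖exp ((z - n) * (2 * Real.pi + b + ε))‖ ≤
      Real.exp ((ρ - n) * (2 * Real.pi + b + ε)) := by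
    rw [norm_exp, Real.exp_le_exp]
    norm_cast
    simp only [mul_re, sub_re, natCast_re, ofReal_re, sub_im, natCast_im, ofReal_im, mul_zero,
      sub_zero]
    gcongr
  have hsinc : ‖dslope sin 0 (2 * Real.pi * (z - n))‖ ≤ Real.exp (2 * Real.pi * (ρ + n)) := by
    refine (norm_dslope_sin_le _).trans (Real.exp_le_exp.2 ?_)
    rw [norm_mul, norm_mul, Complex.norm_two, norm_real, Real.norm_of_nonneg Real.pi_pos.le]
    gcongr
    exact (norm_sub_le _ _).trans (by simpa using hz)
  calc ‖fTerm b ε n z‖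
      ≤ Real.exp ((ρ - n) * (2 * Real.pi + b + ε)) * Real.exp (2 * Real.pi * (ρ + n)) := by
        rw [fTerm_eq_exp_mul_dslope_sin, norm_mul]
        exact mul_le_mul hexp hsinc (norm_nonneg _) (Real.exp_nonneg _)
    _ = Real.exp (ρ * (4 * Real.pi + b + ε) - (b + ε) * n) := by
        rw [← Real.exp_add]
        ring_nf

theorem norm_mul_fTerm_le {ζ : ℂ} {a b ε ρ : ℝ} (hc : 0 ≤ 2 * Real.pi + b + ε) {n : ℕ}
    (hζ : ‖ζ‖ ≤ Real.exp (a + b * n)) {z : ℂ} (hz : ‖z‖ ≤ ρ) :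
    ‖ζ * fTerm b ε n z‖ ≤ Real.exp (a + ρ * (4 * Real.pi + b + ε)) * Real.exp (-ε) ^ n := by
  calc ‖ζ * fTerm b ε n z‖
      ≤ Real.exp (a + b * n) * Real.exp (ρ * (4 * Real.pi + b + ε) - (b + ε) * n) := by
        rw [norm_mul]
        exact mul_le_mul hζ (norm_fTerm_le hc n hz) (norm_nonneg _) (Real.exp_nonneg _)
    _ = Real.exp (a + ρ * (4 * Real.pi + b + ε)) * Real.exp (-ε) ^ n := by
        rw [← Real.exp_nat_mul, ← Real.exp_add, ← Real.exp_add]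
        ring_nf

theorem interp_series_uniform_and_entire (ζ : ℕ → ℂ) (a b : ℝ) (hb : 0 < b)
    (hζ : ∀ n : ℕ, ‖ζ n‖ < Real.exp (a + b * n)) (ε : ℝ) (hε : 0 < ε) :
    (∀ ρ : ℝ, 0 < ρ →
      TendstoUniformlyOn
        (fun (N : Finset ℕ) (z : ℂ) => ∑ n ∈ N, ζ n * fTerm b ε n z)
        (fun z : ℂ => ∑' n : ℕ, ζ n * fTerm b ε n z)
        Filter.atTop {z : ℂ | ‖z‖ < ρ}) ∧
    Differentiable ℂ (fun z : ℂ => ∑' n : ℕ, ζ n * fTerm b ε n z) := by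
  have hc : 0 ≤ 2 * Real.pi + b + ε := by linarith [Real.pi_pos]
  have hsummable (ρ : ℝ) :
      Summable fun n : ℕ => Real.exp (a + ρ * (4 * Real.pi + b + ε)) * Real.exp (-ε) ^ n :=
    (summable_geometric_of_lt_one (Real.exp_nonneg _)
      (Real.exp_lt_one_iff.2 (by linarith))).mul_left _
  have hbound (ρ : ℝ) (n : ℕ) (z : ℂ) (hz : ‖z‖ < ρ) :=
    norm_mul_fTerm_le (ε := ε) hc (hζ n).le hz.le
  exact ⟨fun ρ _ => tendstoUniformlyOn_tsum (hsummable ρ) fun n z hz => hbound ρ n z hz,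
    differentiable_tsum_of_forall_ball (fun n => (differentiable_fTerm b ε n).const_mul _)
      fun ρ => ⟨_, hsummable ρ, hbound ρ⟩⟩
end

section
/- Let (ζ_n)_{n≥0} be a sequence of complex numbers satisfying |ζ_n| < exp(a + bn) for some a ∈ ℝ and b > 0. Then there exists an entire function s : ℂ → ℂ such that s(n) = ζ_n for every integer n ≥ 0. -/
/-!
The interpolant is `s z = ∑ ζ n · exp (c (z - n)) · sinc (π (z - n))` with `c = b + 1`.
The factor `sinc (π (z - n))` equals `1` at `z = n` and vanishes at every other integer, while
`‖sinc (π (z - n))‖ ≤ exp (π |Im z|)` once `‖z - n‖ ≥ 1`. The damping factor `exp (c (z - n))`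
beats the growth `exp (a + b n)` of `ζ n`: for `‖z‖ < R` and `n ≥ R + 1` the `n`-th term is at most
`exp (a + (c + π) R) · exp (-n)`, so the series converges locally uniformly to an entire function.
-/

open Complex Filter Metric Topology

section TsumEntire

variable {ι E : Type*} [NormedAddCommGroup E] [NormedSpace ℂ E] [CompleteSpace E]

theorem differentiableOn_tsum_of_eventually_norm_le {F : ι → ℂ → E} {U : Set ℂ} {u : ι → ℝ}
    (hu : Summable u) (hf : ∀ i, DifferentiableOn ℂ (F i) U) (hU : IsOpen U)
    (hF_le : ∀ᶠ i in cofinite, ∀ w ∈ U, ‖F i w‖ ≤ u i) :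
    DifferentiableOn ℂ (fun w => ∑' i, F i w) U :=
  (tendstoUniformlyOn_tsum_of_cofinite_eventually hu hF_le).tendstoLocallyUniformlyOn
    |>.differentiableOn (Eventually.of_forall fun _ => DifferentiableOn.fun_sum fun i _ => hf i) hU

theorem differentiable_tsum_of_eventually_norm_le {F : ι → ℂ → E}
    (hf : ∀ i, Differentiable ℂ (F i))
    (hF_le : ∀ R : ℝ, ∃ u : ι → ℝ, Summable u ∧ ∀ᶠ i in cofinite, ∀ w, ‖w‖ < R → ‖F i w‖ ≤ u i) :
    Differentiable ℂ fun w => ∑' i, F i w := by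
  intro z
  obtain ⟨u, hu, hle⟩ := hF_le (‖z‖ + 1)
  have hz : ball (0 : ℂ) (‖z‖ + 1) ∈ 𝓝 z := isOpen_ball.mem_nhds (by simp)
  refine (differentiableOn_tsum_of_eventually_norm_le hu (fun i => (hf i).differentiableOn)
    isOpen_ball ?_).differentiableAt hz
  filter_upwards [hle] with i hi w hw
  exact hi w (by simpa using hw)

end TsumEntire

namespace Complex

theorem norm_sin_le_exp_abs_im (z : ℂ) : ‖sin z‖ ≤ Real.exp |z.im| := by
  have h₁ : ‖exp (-z * I)‖ ≤ Real.exp |z.im| := by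
    rw [norm_exp]
    exact Real.exp_le_exp.2 (by simpa using le_abs_self z.im)
  have h₂ : ‖exp (z * I)‖ ≤ Real.exp |z.im| := by
    rw [norm_exp]
    exact Real.exp_le_exp.2 (by simpa using neg_le_abs z.im)
  calc ‖sin z‖ = ‖exp (-z * I) - exp (z * I)‖ / 2 := by simp [sin]
    _ ≤ (‖exp (-z * I)‖ + ‖exp (z * I)‖) / 2 := by gcongr; exact norm_sub_le _ _
    _ ≤ Real.exp |z.im| := by linarith

noncomputable def sinc : ℂ → ℂ := dslope sin 0

@[fun_prop]
theorem differentiable_sinc : Differentiable ℂ sinc :=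
  differentiableOn_univ.1 <|
    (differentiableOn_dslope univ_mem).2 differentiable_sin.differentiableOn

@[simp]
theorem sinc_zero : sinc 0 = 1 := by
  simp [sinc, deriv_sin]

theorem sinc_of_ne_zero {z : ℂ} (hz : z ≠ 0) : sinc z = sin z / z := by
  rw [sinc, dslope_of_ne _ hz, slope_def_field, sin_zero, sub_zero, sub_zero]

theorem sinc_int_mul_pi {k : ℤ} (hk : k ≠ 0) : sinc (k * Real.pi) = 0 := by
  rw [sinc_of_ne_zero (mul_ne_zero (Int.cast_ne_zero.2 hk) (ofReal_ne_zero.2 Real.pi_ne_zero)),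
    sin_int_mul_pi, zero_div]

theorem norm_sinc_le_of_one_le_norm {z : ℂ} (hz : 1 ≤ ‖z‖) : ‖sinc z‖ ≤ Real.exp |z.im| := by
  rw [sinc_of_ne_zero (norm_pos_iff.1 (one_pos.trans_le hz)), norm_div]
  exact (div_le_self (norm_nonneg _) hz).trans (norm_sin_le_exp_abs_im z)

end Complex

noncomputable def sincInterpolationTerm (ζ : ℕ → ℂ) (c : ℝ) (n : ℕ) (z : ℂ) : ℂ :=
  ζ n * exp (c * (z - n)) * sinc (Real.pi * (z - n))

section SincInterpolation

variable (ζ : ℕ → ℂ) (c : ℝ)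

theorem differentiable_sincInterpolationTerm (n : ℕ) :
    Differentiable ℂ (sincInterpolationTerm ζ c n) := by
  unfold sincInterpolationTerm
  fun_prop

theorem sincInterpolationTerm_natCast_self (n : ℕ) : sincInterpolationTerm ζ c n n = ζ n := by
  simp [sincInterpolationTerm]

theorem sincInterpolationTerm_natCast_of_ne {m n : ℕ} (h : n ≠ m) :
    sincInterpolationTerm ζ c n m = 0 := by
  have hmn : (m : ℤ) - n ≠ 0 := sub_ne_zero.2 (by exact_mod_cast h.symm)
  have := sinc_int_mul_pi hmn
  push_cast at this
  simp [sincInterpolationTerm, mul_comm (Real.pi : ℂ), this]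

theorem norm_sincInterpolationTerm_le {n : ℕ} {z : ℂ} (hzn : 1 ≤ ‖z - n‖) :
    ‖sincInterpolationTerm ζ c n z‖ ≤ ‖ζ n‖ * Real.exp (c * (z.re - n) + Real.pi * |z.im|) := by
  have hsinc : ‖sinc (Real.pi * (z - n))‖ ≤ Real.exp (Real.pi * |z.im|) := by
    refine (norm_sinc_le_of_one_le_norm ?_).trans_eq ?_
    · rw [norm_mul, norm_real, Real.norm_of_nonneg Real.pi_pos.le]
      nlinarith [Real.pi_gt_three]
    · simp [abs_mul, abs_of_pos Real.pi_pos]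
  rw [sincInterpolationTerm, norm_mul, norm_mul, norm_exp, Real.exp_add, mul_assoc]
  gcongr
  simp

end SincInterpolation

theorem eventually_norm_sincInterpolationTerm_le (ζ : ℕ → ℂ) {a b : ℝ} (hb : 0 ≤ b + 1)
    (hζ : ∀ n : ℕ, ‖ζ n‖ ≤ Real.exp (a + b * n)) (R : ℝ) :
    ∀ᶠ n in cofinite, ∀ z : ℂ, ‖z‖ < R →
      ‖sincInterpolationTerm ζ (b + 1) n z‖ ≤
        Real.exp (a + (b + 1 + Real.pi) * R) * Real.exp (-n) := by
  rw [Nat.cofinite_eq_atTop]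
  filter_upwards [eventually_ge_atTop ⌈R + 1⌉₊] with n hn z hz
  have hnR : R + 1 ≤ n := (Nat.le_ceil _).trans (by exact_mod_cast hn)
  have hzn : 1 ≤ ‖z - n‖ := by
    have : (n : ℝ) - ‖z‖ ≤ ‖z - n‖ := by simpa [norm_sub_rev] using norm_sub_norm_le (n : ℂ) z
    linarith
  have hre : z.re ≤ R := (re_le_norm z).trans hz.le
  have him : |z.im| ≤ R := (abs_im_le_norm z).trans hz.le
  calc ‖sincInterpolationTerm ζ (b + 1) n z‖
      ≤ ‖ζ n‖ * Real.exp ((b + 1) * (z.re - n) + Real.pi * |z.im|) :=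
        norm_sincInterpolationTerm_le ζ _ hzn
    _ ≤ Real.exp (a + b * n) * Real.exp ((b + 1) * (R - n) + Real.pi * R) := by
        gcongr
        exact hζ n
    _ = Real.exp (a + (b + 1 + Real.pi) * R) * Real.exp (-n) := by
        rw [← Real.exp_add, ← Real.exp_add]
        ring_nf

theorem exists_entire_interpolant (ζ : ℕ → ℂ) (a b : ℝ) (hb : 0 < b)
    (hζ : ∀ n : ℕ, ‖ζ n‖ < Real.exp (a + b * n)) :
    ∃ s : ℂ → ℂ, Differentiable ℂ s ∧ ∀ n : ℕ, s (n : ℂ) = ζ n := by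
  have hζ_le (n : ℕ) : ‖ζ n‖ ≤ Real.exp (a + b * n) := (hζ n).le
  refine ⟨fun z => ∑' n, sincInterpolationTerm ζ (b + 1) n z, ?_, fun m => ?_⟩
  · exact differentiable_tsum_of_eventually_norm_le (differentiable_sincInterpolationTerm ζ _)
      fun R => ⟨_, Real.summable_exp_neg_nat.mul_left _,
        eventually_norm_sincInterpolationTerm_le ζ (by linarith) hζ_le R⟩
  · simp only [tsum_eq_single m fun n hn => sincInterpolationTerm_natCast_of_ne ζ _ hn,
      sincInterpolationTerm_natCast_self]
end
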